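/- (Theorem 3) Let (e, d) be a real-world setting with D = ∑_m d m satisfying D ≤ 1/2, and let π be the Undefended strategy π m = (e m − d m)/(1 − D). Then: (i) the always-attack malware strategy ρ ≡ 1 maximizes u_M(π, ·) over all malware strategies; (ii) u_AM(π, 1) = D; and (iii) for every naive AM strategy π' and every malware strategy ρ', u_AM(π', ρ') ≤ D. Hence the Undefended strategy is AM-optimal in equilibrium and protects every defended machine. -/

import Mathlib

/-!
Writing `D = ∑ d`, `S = ∑ (e - d) ρ` and `T = ∑ d ρ`, the Undefended strategy gives
`∑ π ρ = S / (1 - D)`, so `u_M(π, ρ) = S + (1 - S / (1 - D)) T`, which is affine in `S` with slope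
`1 - T / (1 - D) ≥ 0` because `T ≤ D ≤ 1 - D`. Hence it is maximal at `S = 1 - D`, the value of
`ρ ≡ 1`. For the AM, each defended machine contributes `d m (1 - ρ m (1 - ∑ π' ρ'))`, which is at
most `d m` since `∑ π' ρ' ≤ ∑ π' ≤ 1`; and `π` sums to one, so against `ρ ≡ 1` every such machine
contributes exactly `d m`.
-/

open Finset

section Game

variable {M : Type*} [Fintype M]

def malwareUtility (e d π ρ : M → ℝ) : ℝ :=
  ∑ m, (e m - d m) * ρ m + (1 - ∑ m, π m * ρ m) * ∑ m, d m * ρ m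

def amUtility (d π ρ : M → ℝ) : ℝ :=
  ∑ m, d m * ((1 - ρ m) + ρ m * ∑ m', π m' * ρ m')

noncomputable def undefended (e d : M → ℝ) (m : M) : ℝ :=
  (e m - d m) / (1 - ∑ m', d m')

lemma sum_mul_le_sum_of_le_one {ι : Type*} (s : Finset ι) {w ρ : ι → ℝ}
    (hw : ∀ i ∈ s, 0 ≤ w i) (hρ : ∀ i ∈ s, ρ i ≤ 1) :
    ∑ i ∈ s, w i * ρ i ≤ ∑ i ∈ s, w i :=
  sum_le_sum fun i hi => mul_le_of_le_one_right (hw i hi) (hρ i hi)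

lemma sum_undefended_mul (e d ρ : M → ℝ) :
    ∑ m, undefended e d m * ρ m = (∑ m, (e m - d m) * ρ m) / (1 - ∑ m, d m) := by
  simp only [undefended, div_mul_eq_mul_div, ← sum_div]

lemma sum_undefended {e d : M → ℝ} (hesum : ∑ m, e m = 1) (hD : ∑ m, d m ≠ 1) :
    ∑ m, undefended e d m = 1 := by
  simpa [sum_sub_distrib, hesum, sub_ne_zero.mpr hD.symm] using
    sum_undefended_mul e d (fun _ => 1)

lemma amUtility_one (d π : M → ℝ) : amUtility d π 1 = (∑ m, d m) * ∑ m, π m := by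
  simp [amUtility, sum_mul]

lemma amUtility_le_sum {d π ρ : M → ℝ} (hd : ∀ m, 0 ≤ d m) (hπ : ∀ m, 0 ≤ π m)
    (hπsum : ∑ m, π m ≤ 1) (hρ₀ : ∀ m, 0 ≤ ρ m) (hρ₁ : ∀ m, ρ m ≤ 1) :
    amUtility d π ρ ≤ ∑ m, d m := by
  have hcaught : ∑ m, π m * ρ m ≤ 1 :=
    (sum_mul_le_sum_of_le_one _ (fun m _ => hπ m) fun m _ => hρ₁ m).trans hπsum
  refine sum_le_sum fun m _ => ?_
  nlinarith [mul_nonneg (mul_nonneg (hd m) (hρ₀ m)) (sub_nonneg.2 hcaught)]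

lemma malwareUtility_undefended_le {e d ρ : M → ℝ} (hesum : ∑ m, e m = 1)
    (hd : ∀ m, 0 ≤ d m) (hde : ∀ m, d m ≤ e m) (hD : ∑ m, d m ≤ 1 / 2)
    (hρ : ∀ m, ρ m ≤ 1) :
    malwareUtility e d (undefended e d) ρ ≤ malwareUtility e d (undefended e d) 1 := by
  set D := ∑ m, d m
  have hpos : 0 < 1 - D := by linarith
  have hfree : ∑ m, (e m - d m) = 1 - D := by rw [sum_sub_distrib, hesum]
  have hS : ∑ m, (e m - d m) * ρ m ≤ 1 - D :=
    hfree ▸ sum_mul_le_sum_of_le_one _ (fun m _ => sub_nonneg.2 (hde m)) fun m _ => hρ m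
  have hT : ∑ m, d m * ρ m ≤ D := sum_mul_le_sum_of_le_one _ (fun m _ => hd m) fun m _ => hρ m
  have hP : (∑ m, (e m - d m) * ρ m) / (1 - D) ≤ 1 := (div_le_one hpos).2 hS
  have hone : malwareUtility e d (undefended e d) 1 = 1 - D := by
    simp [malwareUtility, hfree, sum_undefended hesum (by linarith : D ≠ 1)]
  rw [hone, malwareUtility, sum_undefended_mul]
  set S := ∑ m, (e m - d m) * ρ m
  set T := ∑ m, d m * ρ m
  have hSP : S = S / (1 - D) * (1 - D) := (div_mul_cancel₀ _ hpos.ne').symm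
  -- `u_M = P (1 - D) + (1 - P) T` with `P = S / (1 - D) ≤ 1` and `T ≤ D ≤ 1 - D`
  nlinarith [mul_nonneg (sub_nonneg.2 hP) (by linarith : (0 : ℝ) ≤ 1 - D - T)]

end Game

theorem stmt_9_general {M : Type*} [Fintype M]
    (e d : M → ℝ) (hesum : ∑ m, e m = 1)
    (hd : ∀ m, 0 ≤ d m) (hde : ∀ m, d m ≤ e m)
    (hD : ∑ m, d m ≤ 1/2)
    (π : M → ℝ) (hπdef : ∀ m, π m = (e m - d m) / (1 - ∑ m', d m')) :
    (∀ ρ : M → ℝ, (∀ m, 0 ≤ ρ m ∧ ρ m ≤ 1) →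
      (∑ m, (e m - d m) * ρ m) + (1 - ∑ m, π m * ρ m) * (∑ m, d m * ρ m) ≤
        (∑ m, (e m - d m) * (1 : ℝ)) +
          (1 - ∑ m, π m * (1 : ℝ)) * (∑ m, d m * (1 : ℝ))) ∧
    (∑ m, d m * ((1 - (1 : ℝ)) + (1 : ℝ) * (∑ m', π m' * (1 : ℝ))))
        = ∑ m, d m ∧
    (∀ π' : M → ℝ, (∀ m, 0 ≤ π' m) → ∑ m, π' m ≤ 1 →
      ∀ ρ' : M → ℝ, (∀ m, 0 ≤ ρ' m ∧ ρ' m ≤ 1) →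
        ∑ m, d m * ((1 - ρ' m) + ρ' m * (∑ m', π' m' * ρ' m')) ≤ ∑ m, d m) := by
  obtain rfl : π = undefended e d := funext hπdef
  refine ⟨fun ρ hρ => malwareUtility_undefended_le hesum hd hde hD fun m => (hρ m).2, ?_,
    fun π' hπ' hπ'sum ρ' hρ' =>
      amUtility_le_sum hd hπ' hπ'sum (fun m => (hρ' m).1) fun m => (hρ' m).2⟩
  change amUtility d (undefended e d) 1 = _
  rw [amUtility_one, sum_undefended hesum (by linarith), mul_one]

/-- Theorem 3: Let `(e, d)` be a real-world setting with
`D = ∑ m, d m ≤ 1/2`, and let `π` be the Undefended strategy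
`π m = (e m - d m) / (1 - D)`.  Then (i) the always-attack strategy `ρ ≡ 1`
maximizes `u_M(π, ·)` over all malware strategies; (ii) `u_AM(π, 1) = D`; and
(iii) every naive AM strategy `π'` and malware strategy `ρ'` give
`u_AM(π', ρ') ≤ D`.  Hence Undefended is AM-optimal in equilibrium and protects
every defended machine.  Here
`u_M(π,ρ) = ∑ m, (e m - d m) * ρ m + (1 - ∑ m, π m * ρ m) * (∑ m, d m * ρ m)`
and `u_AM(π,ρ) = ∑ m, d m * ((1 - ρ m) + ρ m * (∑ m', π m' * ρ m'))`. -/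
theorem stmt_9 {M : Type*} [Fintype M] [Nonempty M]
    (e d : M → ℝ) (he : ∀ m, 0 ≤ e m) (hesum : ∑ m, e m = 1)
    (hd : ∀ m, 0 ≤ d m) (hde : ∀ m, d m ≤ e m)
    (hD : ∑ m, d m ≤ 1/2)
    (π : M → ℝ) (hπdef : ∀ m, π m = (e m - d m) / (1 - ∑ m', d m')) :
    (∀ ρ : M → ℝ, (∀ m, 0 ≤ ρ m ∧ ρ m ≤ 1) →
      (∑ m, (e m - d m) * ρ m) + (1 - ∑ m, π m * ρ m) * (∑ m, d m * ρ m) ≤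
        (∑ m, (e m - d m) * (1 : ℝ)) +
          (1 - ∑ m, π m * (1 : ℝ)) * (∑ m, d m * (1 : ℝ))) ∧
    (∑ m, d m * ((1 - (1 : ℝ)) + (1 : ℝ) * (∑ m', π m' * (1 : ℝ))))
        = ∑ m, d m ∧
    (∀ π' : M → ℝ, (∀ m, 0 ≤ π' m) → ∑ m, π' m ≤ 1 →
      ∀ ρ' : M → ℝ, (∀ m, 0 ≤ ρ' m ∧ ρ' m ≤ 1) →
        ∑ m, d m * ((1 - ρ' m) + ρ' m * (∑ m', π' m' * ρ' m')) ≤ ∑ m, d m) :=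
  stmt_9_general e d hesum hd hde hD π hπdef
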